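/- Let T₁ ≥ T₂ ≥ ⋯ be a non-increasing sequence of positive contractions on a Hilbert space H with strong limit T, and P the projection onto the fixed point space of T. Then S_n = T_n ⋯ T₁ converges to P in the weak operator topology: for all ξ, η ∈ H, ⟨S_n ξ, η⟩ → ⟨Pξ, η⟩. -/

import Mathlib

/-!
For `0 ≤ A ≤ 1` one has `A ^ 2 ≤ A`, hence `‖(1 - A) x‖ ^ 2 ≤ re ⟪(1 - A) x, x⟫ ≤ ‖x‖ ^ 2 - ‖A x‖ ^ 2`.
Along the orbit `x n = S n ξ` the norms decrease, so `‖x n‖ ^ 2 - ‖x (n + 1)‖ ^ 2 → 0`, and since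
`1 - T m ≤ 1 - T (n + 1)` for `n ≥ m` this forces `(1 - T m) (x n) → 0` for every `m`.

The vectors `y` with `⟪x n, y⟫ → 0` form a closed subspace `N` (the functionals `⟪x n, ·⟫` are
uniformly bounded) containing every range of `1 - T m`; so a vector orthogonal to `N` is fixed by
every `T m`, hence by `T` and by `P`. Therefore `η - P η ∈ Nᗮᗮ = N`. The same estimate shows that the
fixed vector `P η` of `T` is fixed by every `T m`, so `⟪S n ξ, P η⟫ = ⟪ξ, P η⟫` for all `n`.
-/

open Filter Topology

noncomputable section

local notation "⟪" x ", " y "⟫" => @inner ℂ _ _ x y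

variable {H : Type*} [NormedAddCommGroup H] [InnerProductSpace ℂ H] [CompleteSpace H]

open RCLike ContinuousLinearMap

section General

variable {𝕜 E ι : Type*} [RCLike 𝕜] [NormedAddCommGroup E] [InnerProductSpace 𝕜 E]

variable (𝕜) in
def weakNullSubmodule (l : Filter ι) (x : ι → E) : Submodule 𝕜 E where
  carrier := {y | Tendsto (fun i => inner 𝕜 (x i) y) l (𝓝 0)}
  add_mem' {y z} hy hz := by simpa [inner_add_right] using hy.add hz
  zero_mem' := by simpa using tendsto_const_nhds
  smul_mem' c y hy := by simpa [inner_smul_right] using hy.const_mul c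

theorem isClosed_weakNullSubmodule {l : Filter ι} {x : ι → E}
    (hx : BddAbove (Set.range fun i => ‖x i‖)) :
    IsClosed (weakNullSubmodule 𝕜 l x : Set E) := by
  let f : ι → E →L[𝕜] 𝕜 := fun i => innerSL 𝕜 (x i)
  have hf : Equicontinuous ((↑) ∘ f) :=
    ((NormedSpace.equicontinuous_TFAE f).out 7 1).1
      (by simpa only [f, innerSL_apply_norm] using hx)
  exact hf.isClosed_setOfPred_tendsto continuous_const

theorem re_inner_le_re_inner_of_le {A B : E →L[𝕜] E} (h : A ≤ B) (x : E) :
    re (inner 𝕜 (A x) x) ≤ re (inner 𝕜 (B x) x) := by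
  simpa [inner_sub_left] using ((le_def A B).mp h).re_inner_nonneg_left x

theorem inner_orbit_eq_of_forall_apply_eq_self {T : ℕ → E →L[𝕜] E}
    (hT : ∀ n, (T n : E →ₗ[𝕜] E).IsSymmetric) {x : ℕ → E} (hx : ∀ n, x (n + 1) = T (n + 1) (x n))
    {v : E} (hv : ∀ m, T m v = v) (n : ℕ) : inner 𝕜 (x n) v = inner 𝕜 (x 0) v := by
  induction n with
  | zero => rfl
  | succ n ih => rw [hx n, ← coe_coe, hT, coe_coe, hv, ih]

end General

section PositiveContraction

variable {E : Type*} [NormedAddCommGroup E] [InnerProductSpace ℂ E] [CompleteSpace E]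
  {A : E →L[ℂ] E}

theorem norm_apply_le_of_nonneg_of_le_one (h0 : 0 ≤ A) (h1 : A ≤ 1) (x : E) : ‖A x‖ ≤ ‖x‖ := by
  simpa using le_of_opNorm_le A ((CStarAlgebra.norm_le_one_iff_of_nonneg A h0).mpr h1) x

theorem norm_sq_le_re_inner_of_nonneg_of_le_one (h0 : 0 ≤ A) (h1 : A ≤ 1) (x : E) :
    ‖A x‖ ^ 2 ≤ re ⟪A x, x⟫ := by
  have hsq : A ^ 2 ≤ A := by simpa using CStarAlgebra.pow_antitone h0 h1 one_le_two
  have := re_inner_le_re_inner_of_le hsq x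
  rwa [sq A, mul_apply_eq_comp, ((nonneg_iff_isPositive A).mp h0).inner_left_eq_inner_right,
    inner_self_eq_norm_sq] at this

theorem re_inner_one_sub_le (h0 : 0 ≤ A) (h1 : A ≤ 1) (x : E) :
    re ⟪(1 - A) x, x⟫ ≤ ‖x‖ ^ 2 - ‖A x‖ ^ 2 := by
  have := norm_sq_le_re_inner_of_nonneg_of_le_one h0 h1 x
  simp only [sub_apply, one_apply_eq_self, inner_sub_left, map_sub, inner_self_eq_norm_sq]
  linarith

theorem norm_sq_one_sub_le_re_inner (h0 : 0 ≤ A) (h1 : A ≤ 1) (x : E) :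
    ‖(1 - A) x‖ ^ 2 ≤ re ⟪(1 - A) x, x⟫ :=
  norm_sq_le_re_inner_of_nonneg_of_le_one (sub_nonneg.mpr h1) (sub_le_self _ h0) x

variable {T : ℕ → E →L[ℂ] E}

theorem apply_eq_self_of_tendsto (hT : Antitone T) (h0 : ∀ n, 0 ≤ T n) (h1 : ∀ n, T n ≤ 1)
    {v : E} (hv : Tendsto (fun n => T n v) atTop (𝓝 v)) (m : ℕ) : T m v = v := by
  have hlim : Tendsto (fun n => re ⟪(1 - T n) v, v⟫) atTop (𝓝 0) := by
    have h : Tendsto (fun n => ⟪v - T n v, v⟫) atTop (𝓝 ⟪v - v, v⟫) :=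
      (tendsto_const_nhds.sub hv).inner tendsto_const_nhds
    simpa [Function.comp_def] using (Complex.continuous_re.tendsto _).comp h
  have hle : ‖(1 - T m) v‖ ^ 2 ≤ 0 := by
    refine ge_of_tendsto hlim (eventually_atTop.2 ⟨m, fun n hn => ?_⟩)
    calc ‖(1 - T m) v‖ ^ 2 ≤ re ⟪(1 - T m) v, v⟫ :=
          norm_sq_one_sub_le_re_inner (h0 m) (h1 m) v
      _ ≤ re ⟪(1 - T n) v, v⟫ := re_inner_le_re_inner_of_le (sub_le_sub_left (hT hn) 1) v
  have : (1 - T m) v = 0 := by simpa using hle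
  exact (sub_eq_zero.mp this).symm

theorem antitone_norm_orbit (h0 : ∀ n, 0 ≤ T n) (h1 : ∀ n, T n ≤ 1) {x : ℕ → E}
    (hx : ∀ n, x (n + 1) = T (n + 1) (x n)) :
    Antitone fun n => ‖x n‖ :=
  antitone_nat_of_succ_le fun n => by
    simpa [hx n] using norm_apply_le_of_nonneg_of_le_one (h0 (n + 1)) (h1 (n + 1)) (x n)

theorem tendsto_one_sub_apply_orbit (hT : Antitone T) (h0 : ∀ n, 0 ≤ T n) (h1 : ∀ n, T n ≤ 1)
    {x : ℕ → E} (hx : ∀ n, x (n + 1) = T (n + 1) (x n)) (m : ℕ) :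
    Tendsto (fun n => (1 - T m) (x n)) atTop (𝓝 0) := by
  have hanti : Antitone fun n => ‖x n‖ ^ 2 := fun a b hab =>
    pow_le_pow_left₀ (norm_nonneg _) (antitone_norm_orbit h0 h1 hx hab) 2
  obtain ⟨c, hc⟩ : ∃ c, Tendsto (fun n => ‖x n‖ ^ 2) atTop (𝓝 c) :=
    ⟨_, tendsto_atTop_ciInf hanti ⟨0, by rintro _ ⟨n, rfl⟩; positivity⟩⟩
  have hgap : Tendsto (fun n => ‖x n‖ ^ 2 - ‖x (n + 1)‖ ^ 2) atTop (𝓝 0) := by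
    simpa using hc.sub (hc.comp (tendsto_add_atTop_nat 1))
  have hsq : Tendsto (fun n => ‖(1 - T m) (x n)‖ ^ 2) atTop (𝓝 0) := by
    refine squeeze_zero' (Eventually.of_forall fun n => by positivity)
      (eventually_atTop.2 ⟨m, fun n hn => ?_⟩) hgap
    calc ‖(1 - T m) (x n)‖ ^ 2 ≤ re ⟪(1 - T m) (x n), x n⟫ :=
          norm_sq_one_sub_le_re_inner (h0 m) (h1 m) (x n)
      _ ≤ re ⟪(1 - T (n + 1)) (x n), x n⟫ :=
          re_inner_le_re_inner_of_le (sub_le_sub_left (hT (hn.trans n.le_succ)) 1) (x n)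
      _ ≤ ‖x n‖ ^ 2 - ‖x (n + 1)‖ ^ 2 := hx n ▸ re_inner_one_sub_le (h0 _) (h1 _) (x n)
  rw [tendsto_zero_iff_norm_tendsto_zero]
  simpa using hsq.sqrt

theorem apply_eq_self_of_mem_orthogonal_weakNullSubmodule (hT : Antitone T)
    (h0 : ∀ n, 0 ≤ T n) (h1 : ∀ n, T n ≤ 1) {x : ℕ → E} (hx : ∀ n, x (n + 1) = T (n + 1) (x n))
    {u : E} (hu : u ∈ (weakNullSubmodule ℂ atTop x)ᗮ) (m : ℕ) : T m u = u := by
  have hsymm : ∀ a b, ⟪(1 - T m) a, b⟫ = ⟪a, (1 - T m) b⟫ :=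
    ((nonneg_iff_isPositive _).mp (sub_nonneg.mpr (h1 m))).inner_left_eq_inner_right
  have hmem : (1 - T m) ((1 - T m) u) ∈ weakNullSubmodule ℂ atTop x := by
    change Tendsto (fun n => ⟪x n, (1 - T m) ((1 - T m) u)⟫) atTop (𝓝 0)
    have h := (tendsto_one_sub_apply_orbit hT h0 h1 hx m).inner (𝕜 := ℂ)
      (tendsto_const_nhds : Tendsto (fun _ => (1 - T m) u) atTop _)
    rw [inner_zero_left] at h
    exact h.congr fun n => hsymm _ _
  have h : ⟪(1 - T m) u, (1 - T m) u⟫ = 0 := by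
    rw [← hsymm]
    exact Submodule.inner_right_of_mem_orthogonal hmem hu
  rw [inner_self_eq_zero, sub_apply, sub_eq_zero] at h
  exact h.symm

end PositiveContraction

theorem stmt7_general
    (T : ℕ → H →L[ℂ] H) (hpos : ∀ n, 0 ≤ T n) (hcontr : ∀ n, T n ≤ 1)
    (hmono : ∀ n, T (n + 1) ≤ T n)
    (S : ℕ → H →L[ℂ] H) (hS0 : S 0 = T 0) (hSsucc : ∀ n, S (n + 1) = T (n + 1) ∘L S n)
    (Tlim : H →L[ℂ] H) (hTlim : ∀ ξ : H, Tendsto (fun n => T n ξ) atTop (nhds (Tlim ξ)))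
    (P : H →L[ℂ] H) (hP : IsIdempotentElem P) (hPsa : IsSelfAdjoint P)
    (hPfix : ∀ ξ : H, P ξ = ξ ↔ Tlim ξ = ξ) :
    ∀ ξ η : H, Tendsto (fun n => ⟪S n ξ, η⟫) atTop (nhds ⟪P ξ, η⟫) := by
  intro ξ η
  have hT : Antitone T := antitone_nat_of_succ_le hmono
  have hsymm (n : ℕ) : (T n : H →ₗ[ℂ] H).IsSymmetric :=
    ((nonneg_iff_isPositive _).mp (hpos n)).isSymmetric
  have hPsymm : ∀ a b, ⟪P a, b⟫ = ⟪a, P b⟫ := hPsa.isSymmetric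
  have horbit (n : ℕ) : S (n + 1) ξ = T (n + 1) (S n ξ) := by rw [hSsucc]; rfl
  have hPη : ∀ m, T m (P η) = P η := by
    have hfix : Tlim (P η) = P η := (hPfix _).1 (congrArg (· η) hP.eq)
    exact apply_eq_self_of_tendsto hT hpos hcontr (by simpa only [hfix] using hTlim (P η))
  have hconst (n : ℕ) : ⟪S n ξ, P η⟫ = ⟪ξ, P η⟫ := by
    rw [inner_orbit_eq_of_forall_apply_eq_self (x := fun n => S n ξ) hsymm horbit hPη, hS0]
    simpa [hPη] using hsymm 0 ξ (P η)
  have hbdd : BddAbove (Set.range fun n => ‖S n ξ‖) := ⟨‖S 0 ξ‖, Set.forall_mem_range.2 fun n =>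
    antitone_norm_orbit (x := fun n => S n ξ) hpos hcontr horbit n.zero_le⟩
  have hnull : η - P η ∈ weakNullSubmodule ℂ atTop fun n => S n ξ := by
    rw [← (isClosed_weakNullSubmodule hbdd).submodule_topologicalClosure_eq,
      ← Submodule.orthogonal_orthogonal_eq_closure, Submodule.mem_orthogonal]
    intro u hu
    have hfix := apply_eq_self_of_mem_orthogonal_weakNullSubmodule hT hpos hcontr horbit hu
    have hPu : P u = u := (hPfix u).2 (tendsto_nhds_unique (hTlim u) (by simp [hfix]))
    rw [inner_sub_right, ← hPsymm, hPu, sub_self]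
  have hsplit (n : ℕ) : ⟪S n ξ, η⟫ = ⟪ξ, P η⟫ + ⟪S n ξ, η - P η⟫ := by
    rw [inner_sub_right, hconst]; ring
  rw [hPsymm, funext hsplit]
  simpa only [add_zero] using Tendsto.const_add ⟪ξ, P η⟫ hnull

theorem stmt7 [TopologicalSpace.SeparableSpace H]
    (T : ℕ → H →L[ℂ] H) (hpos : ∀ n, 0 ≤ T n) (hcontr : ∀ n, T n ≤ 1)
    (hmono : ∀ n, T (n + 1) ≤ T n)
    (S : ℕ → H →L[ℂ] H) (hS0 : S 0 = T 0) (hSsucc : ∀ n, S (n + 1) = T (n + 1) ∘L S n)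
    (Tlim : H →L[ℂ] H) (hTlim : ∀ ξ : H, Tendsto (fun n => T n ξ) atTop (nhds (Tlim ξ)))
    (P : H →L[ℂ] H) (hP : IsIdempotentElem P) (hPsa : IsSelfAdjoint P)
    (hPfix : ∀ ξ : H, P ξ = ξ ↔ Tlim ξ = ξ) :
    ∀ ξ η : H, Tendsto (fun n => ⟪S n ξ, η⟫) atTop (nhds ⟪P ξ, η⟫) :=
  stmt7_general T hpos hcontr hmono S hS0 hSsucc Tlim hTlim P hP hPsa hPfix
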